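/- A numerical semigroup S has α-rectangular Apéry set if and only if the poset (Ap(S,m), ⪯) has a unique maximal element and that element has a unique representation as a nonnegative integer combination of the minimal generators. -/

import Mathlib

/-- A numerical semigroup: a subset of ℕ containing 0, closed under addition,
with finite complement. -/
structure NumSgp where
  carrier : Set ℕ
  zero_mem : 0 ∈ carrier
  add_mem : ∀ a ∈ carrier, ∀ b ∈ carrier, a + b ∈ carrier
  cofinite : Set.Finite carrierᶜ

namespace NumSgp

/-- The multiplicity: the smallest positive element. -/
noncomputable def mult (S : NumSgp) : ℕ := sInf {s | s ∈ S.carrier ∧ s ≠ 0}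

/-- The Apéry set of `S` with respect to `n`: elements `s ∈ S` with `s - n ∉ S`. -/
def Apery (S : NumSgp) (n : ℕ) : Set ℕ :=
  {s | s ∈ S.carrier ∧ ¬ ∃ t ∈ S.carrier, s = t + n}

/-- `s ⪯ t` : there is `u ∈ S` with `t = s + u`. -/
def sle (S : NumSgp) (s t : ℕ) : Prop := ∃ u ∈ S.carrier, t = s + u

/-- Membership for integers. -/
def memZ (S : NumSgp) (x : ℤ) : Prop := ∃ n ∈ S.carrier, (n : ℤ) = x

/-- `f` is the Frobenius number of `S`: the largest integer not in `S`. -/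
def IsFrob (S : NumSgp) (f : ℤ) : Prop := ¬ S.memZ f ∧ ∀ x : ℤ, f < x → S.memZ x

/-- `S` is symmetric: `x ∈ S ↔ f - x ∉ S` for all integers `x`. -/
def Symm (S : NumSgp) : Prop :=
  ∃ f : ℤ, S.IsFrob f ∧ ∀ x : ℤ, S.memZ x ↔ ¬ S.memZ (f - x)

/-- `s` is a minimal generator (irreducible element) of `S`. -/
def IsMinGen (S : NumSgp) (s : ℕ) : Prop :=
  s ∈ S.carrier ∧ s ≠ 0 ∧
    ¬ ∃ a ∈ S.carrier, ∃ b ∈ S.carrier, a ≠ 0 ∧ b ≠ 0 ∧ s = a + b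

/-- `g : Fin ν → ℕ` enumerates the minimal generators in increasing order. -/
def MinGens (S : NumSgp) {ν : ℕ} (g : Fin ν → ℕ) : Prop :=
  StrictMono g ∧ Set.range g = {s | S.IsMinGen s}

/-- The order of `s`: the maximal total coefficient sum over representations of `s`
in terms of the generators `g`. -/
noncomputable def ord {ν : ℕ} (g : Fin ν → ℕ) (s : ℕ) : ℕ :=
  sSup {k | ∃ lam : Fin ν → ℕ, s = ∑ i, lam i * g i ∧ k = ∑ i, lam i}

/-- `s` has a unique representation in terms of the generators `g`. -/
def UniqueRep {ν : ℕ} (g : Fin ν → ℕ) (s : ℕ) : Prop :=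
  ∃! lam : Fin ν → ℕ, s = ∑ i, lam i * g i

/-- `s` has a unique maximal representation in terms of the generators `g`. -/
def UniqueMaxRep {ν : ℕ} (g : Fin ν → ℕ) (s : ℕ) : Prop :=
  ∃! lam : Fin ν → ℕ, s = ∑ i, lam i * g i ∧ ∑ i, lam i = ord g s

/-- The submonoid of ℕ generated by the generators `g j` with `j < i`. -/
def genBy {ν : ℕ} (g : Fin ν → ℕ) (i : Fin ν) : Set ℕ :=
  {s | ∃ lam : Fin ν → ℕ, (∀ j, ¬ j < i → lam j = 0) ∧ s = ∑ j, lam j * g j}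

/-- `τ_i = min {h | h·g_i ∈ ⟨g_1, …, g_{i-1}⟩} - 1`. -/
noncomputable def tau {ν : ℕ} (g : Fin ν → ℕ) (i : Fin ν) : ℕ :=
  sInf {h | h * g i ∈ genBy g i} - 1

/-- `α_i = max {h | h·g_i ∈ Ap(S, m)}`. -/
noncomputable def alpha (S : NumSgp) {ν : ℕ} (g : Fin ν → ℕ) (i : Fin ν) : ℕ :=
  sSup {h | h * g i ∈ S.Apery S.mult}

/-- `β_i = max {h | h·g_i ∈ Ap(S, m) and ord(h·g_i) = h}`. -/
noncomputable def beta (S : NumSgp) {ν : ℕ} (g : Fin ν → ℕ) (i : Fin ν) : ℕ :=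
  sSup {h | h * g i ∈ S.Apery S.mult ∧ ord g (h * g i) = h}

/-- `γ_i`. -/
noncomputable def gamma (S : NumSgp) {ν : ℕ} (g : Fin ν → ℕ) (i : Fin ν) : ℕ :=
  sSup {h | h * g i ∈ S.Apery S.mult ∧ ord g (h * g i) = h ∧ UniqueMaxRep g (h * g i)}

/-- The "rectangle" `{Σ_{i ≥ 2} λ_i g_i | 0 ≤ λ_i ≤ c_i}` (indices here start at 0,
the first generator does not appear). -/
def rect {ν : ℕ} (g c : Fin ν → ℕ) : Set ℕ :=
  {s | ∃ lam : Fin ν → ℕ, (∀ i, i.val = 0 → lam i = 0) ∧ (∀ i, lam i ≤ c i) ∧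
    s = ∑ i, lam i * g i}

/-- `Π_{i ≥ 2} (c_i + 1)` (the first index excluded). -/
def piProd {ν : ℕ} (c : Fin ν → ℕ) : ℕ :=
  ∏ i ∈ Finset.univ.filter (fun i : Fin ν => i.val ≠ 0), (c i + 1)

/-- `S` is telescopic. -/
def Telescopic (S : NumSgp) : Prop :=
  ∃ (ν : ℕ) (g : Fin ν → ℕ), S.MinGens g ∧ S.Apery S.mult = rect g (tau g)

/-- `S` has α-rectangular Apéry set. -/
def AlphaRect (S : NumSgp) : Prop :=
  ∃ (ν : ℕ) (g : Fin ν → ℕ), S.MinGens g ∧ S.Apery S.mult = rect g (S.alpha g)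

/-- `S` has γ-rectangular Apéry set. -/
def GammaRect (S : NumSgp) : Prop :=
  ∃ (ν : ℕ) (g : Fin ν → ℕ), S.MinGens g ∧ S.Apery S.mult = rect g (S.gamma g)

/-- `S` is associated to a plane branch: telescopic and `(τ_i+1) g_i < g_{i+1}`. -/
def PlaneBranch (S : NumSgp) : Prop :=
  ∃ (ν : ℕ) (g : Fin ν → ℕ), S.MinGens g ∧ S.Apery S.mult = rect g (tau g) ∧
    ∀ i : Fin ν, 1 ≤ i.val → ∀ h : i.val + 1 < ν, (tau g i + 1) * g i < g ⟨i.val + 1, h⟩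

/-- `S` is free: for some rearrangement `n` of the minimal generators,
`Ap(S, n_1) = {Σ_{i ≥ 2} λ_i n_i | 0 ≤ λ_i ≤ φ_i}`. -/
def Free (S : NumSgp) : Prop :=
  ∃ (ν : ℕ) (hν : 0 < ν) (n : Fin ν → ℕ), Function.Injective n ∧
    Set.range n = {s | S.IsMinGen s} ∧ S.Apery (n ⟨0, hν⟩) = rect n (tau n)

/-- The kernel congruence of the factorization map `λ ↦ Σ λ_i g_i`. -/
def kerCon {ν : ℕ} (g : Fin ν → ℕ) : AddCon (Fin ν → ℕ) where
  r a b := ∑ i, a i * g i = ∑ i, b i * g i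
  iseqv := ⟨fun _ => rfl, Eq.symm, Eq.trans⟩
  add' := by
    intro a b c d h1 h2
    simp only [Pi.add_apply, add_mul, Finset.sum_add_distrib]
    exact congrArg₂ (· + ·) h1 h2

/-- `S` is a complete intersection: it admits a presentation of cardinality `ν - 1`
(the cardinality of any minimal presentation equals `ν - 1`). -/
def CompleteIntersection (S : NumSgp) : Prop :=
  ∃ (ν : ℕ) (g : Fin ν → ℕ), S.MinGens g ∧
    ∃ ρ : Finset ((Fin ν → ℕ) × (Fin ν → ℕ)), ρ.card = ν - 1 ∧
      addConGen (fun a b => (a, b) ∈ ρ) = kerCon g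

end NumSgp

/-!
Write `x ⪯ y` for `y - x ∈ S` and `Ap = Ap(S, m)`, a finite set closed downwards under `⪯`.
An element of `Ap` never uses the generator `m` in a factorization, and `λ_i ≤ α_i` for any
factorization `λ` of an element of `Ap`.

If `Ap` is the rectangle with corner `α`, the corner `x = Σ α_i g_i` lies above every element of
`Ap`, so it is the unique maximal element, and every factorization of `x` is bounded by `α`
coefficientwise, hence equals `α`.

Conversely, in the finite poset `Ap` a unique maximal element `x` is the greatest element. If `x`
has a unique factorization `μ`, every factorization of an element `w ⪯ x` is bounded by `μ`:
append a factorization of `x - w`. Applied to `α_i g_i ⪯ x` this shows that `μ` is the corner,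
and then `Ap = {Σ λ_i g_i | λ ≤ μ}` is the rectangle.
-/

namespace NumSgp

section Factorizations

variable {ν : ℕ} {g lam μ : Fin ν → ℕ}

lemma dotProduct_eq_add_of_le (h : lam ≤ μ) : μ ⬝ᵥ g = lam ⬝ᵥ g + (μ - lam) ⬝ᵥ g := by
  rw [← add_dotProduct, add_tsub_cancel_of_le h]

lemma eq_of_le_of_dotProduct_eq (hg : ∀ i, g i ≠ 0) (h : lam ≤ μ)
    (heq : lam ⬝ᵥ g = μ ⬝ᵥ g) : lam = μ := by
  have hzero : (μ - lam) ⬝ᵥ g = 0 := by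
    have := dotProduct_eq_add_of_le (g := g) h
    omega
  refine le_antisymm h fun i => ?_
  have hi := Finset.sum_eq_zero_iff.mp hzero i (Finset.mem_univ i)
  simp only [Pi.sub_apply, mul_eq_zero, hg i, or_false] at hi
  exact Nat.le_of_sub_eq_zero hi

lemma single_le_of_le {i : Fin ν} {a : ℕ} (h : a ≤ μ i) : Pi.single i a ≤ μ := by
  intro j
  rcases eq_or_ne j i with rfl | hj
  · simpa using h
  · simp [hj]

end Factorizations

variable (S : NumSgp)

def toAddSubmonoid : AddSubmonoid ℕ where
  carrier := S.carrier
  zero_mem' := S.zero_mem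
  add_mem' {a b} ha hb := S.add_mem a ha b hb

lemma dotProduct_mem {ν : ℕ} {g : Fin ν → ℕ} (hg : ∀ i, g i ∈ S.carrier) (lam : Fin ν → ℕ) :
    lam ⬝ᵥ g ∈ S.carrier :=
  S.toAddSubmonoid.sum_mem fun i _ => by
    simpa using S.toAddSubmonoid.nsmul_mem (hg i) (lam i)

lemma exists_forall_lt_mem : ∃ N, ∀ s, N < s → s ∈ S.carrier := by
  obtain ⟨N, hN⟩ := S.cofinite.bddAbove
  exact ⟨N, fun s hs => by_contra fun h => absurd (hN h) (not_le.mpr hs)⟩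

lemma mult_mem_and_ne_zero : S.mult ∈ S.carrier ∧ S.mult ≠ 0 := by
  obtain ⟨N, hN⟩ := S.exists_forall_lt_mem
  have hne : ∃ s, s ∈ S.carrier ∧ s ≠ 0 := ⟨N + 1, hN _ N.lt_succ_self, N.succ_ne_zero⟩
  exact Nat.sInf_mem hne

lemma mult_isMinGen : S.IsMinGen S.mult := by
  obtain ⟨hm, hm0⟩ := S.mult_mem_and_ne_zero
  refine ⟨hm, hm0, ?_⟩
  rintro ⟨a, ha, b, hb, ha0, hb0, hab⟩
  have ha' : S.mult ≤ a := Nat.sInf_le ⟨ha, ha0⟩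
  have hb' : S.mult ≤ b := Nat.sInf_le ⟨hb, hb0⟩
  omega

lemma bddAbove_apery (n : ℕ) : BddAbove (S.Apery n) := by
  obtain ⟨N, hN⟩ := S.exists_forall_lt_mem
  refine ⟨N + n, fun s hs => ?_⟩
  by_contra h
  exact hs.2 ⟨s - n, hN _ (by omega), by omega⟩

lemma zero_mem_apery {n : ℕ} (hn : n ≠ 0) : 0 ∈ S.Apery n :=
  ⟨S.zero_mem, fun ⟨_, _, h⟩ => hn (by omega)⟩

section Sle

variable {S} {a b c : ℕ}

lemma sle_refl (a : ℕ) : S.sle a a := ⟨0, S.zero_mem, rfl⟩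

lemma sle_trans : S.sle a b → S.sle b c → S.sle a c := by
  rintro ⟨u, hu, rfl⟩ ⟨v, hv, rfl⟩
  exact ⟨u + v, S.add_mem u hu v hv, by ring⟩

lemma le_of_sle : S.sle a b → a ≤ b := by
  rintro ⟨u, -, rfl⟩
  exact Nat.le_add_right a u

lemma mem_apery_of_sle {n : ℕ} (hb : b ∈ S.Apery n) (ha : a ∈ S.carrier) (h : S.sle a b) :
    a ∈ S.Apery n := by
  obtain ⟨u, hu, rfl⟩ := h
  refine ⟨ha, ?_⟩
  rintro ⟨t, ht, rfl⟩
  exact hb.2 ⟨t + u, S.add_mem t ht u hu, by ring⟩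

lemma dotProduct_sle_of_le {ν : ℕ} {g lam μ : Fin ν → ℕ} (hg : ∀ i, g i ∈ S.carrier)
    (h : lam ≤ μ) : S.sle (lam ⬝ᵥ g) (μ ⬝ᵥ g) :=
  ⟨_, S.dotProduct_mem hg _, dotProduct_eq_add_of_le h⟩

end Sle

def IsSleMaximal (A : Set ℕ) (x : ℕ) : Prop :=
  x ∈ A ∧ ∀ y ∈ A, S.sle x y → y = x

section Maximal

variable {S} {A : Set ℕ} {w x : ℕ}

lemma exists_isSleMaximal_sle (hA : BddAbove A) (hw : w ∈ A) :
    ∃ x, S.IsSleMaximal A x ∧ S.sle w x := by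
  obtain ⟨N, hN⟩ := hA
  induction h : N - w using Nat.strong_induction_on generalizing w with
  | _ k ih =>
    by_cases hmax : S.IsSleMaximal A w
    · exact ⟨w, hmax, sle_refl w⟩
    obtain ⟨y, hy, hwy, hyw⟩ : ∃ y ∈ A, S.sle w y ∧ y ≠ w := by
      simpa [IsSleMaximal, hw] using hmax
    have hlt : w < y := (le_of_sle hwy).lt_of_ne hyw.symm
    obtain ⟨x, hx, hyx⟩ := ih (N - y) (by have := hN hy; omega) hy rfl
    exact ⟨x, hx, sle_trans hwy hyx⟩

lemma sle_of_forall_isSleMaximal_eq (hA : BddAbove A)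
    (hx : ∀ x', S.IsSleMaximal A x' → x' = x) (hw : w ∈ A) : S.sle w x := by
  obtain ⟨x', hx', hwx'⟩ := exists_isSleMaximal_sle hA hw
  exact hx x' hx' ▸ hwx'

lemma isSleMaximal_of_forall_sle (hx : x ∈ A) (h : ∀ w ∈ A, S.sle w x) :
    S.IsSleMaximal A x ∧ ∀ x', S.IsSleMaximal A x' → x' = x :=
  ⟨⟨hx, fun y hy hxy => (le_of_sle (h y hy)).antisymm (le_of_sle hxy)⟩,
    fun _ hx' => (hx'.2 x hx (h _ hx'.1)).symm⟩

end Maximal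

namespace MinGens

variable {S} {ν : ℕ} {g : Fin ν → ℕ} (hg : S.MinGens g)
include hg

lemma isMinGen (i : Fin ν) : S.IsMinGen (g i) := by
  simpa [hg.2] using Set.mem_range_self (f := g) i

lemma mem (i : Fin ν) : g i ∈ S.carrier := (hg.isMinGen i).1

lemma ne_zero (i : Fin ν) : g i ≠ 0 := (hg.isMinGen i).2.1

lemma apply_zero (hν : 0 < ν) : g ⟨0, hν⟩ = S.mult := by
  obtain ⟨j, hj⟩ : S.mult ∈ Set.range g := by rw [hg.2]; exact S.mult_isMinGen
  have h1 : g ⟨0, hν⟩ ≤ g j := hg.1.monotone (Nat.zero_le j.val)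
  have h2 : S.mult ≤ g ⟨0, hν⟩ := Nat.sInf_le ⟨hg.mem _, hg.ne_zero _⟩
  omega

lemma exists_eq_dotProduct {s : ℕ} (hs : s ∈ S.carrier) : ∃ lam, s = lam ⬝ᵥ g := by
  induction s using Nat.strong_induction_on with
  | _ s ih =>
    by_cases h0 : s = 0
    · exact ⟨0, by simp [h0]⟩
    by_cases hmin : S.IsMinGen s
    · obtain ⟨i, rfl⟩ : s ∈ Set.range g := by rw [hg.2]; exact hmin
      exact ⟨Pi.single i 1, by rw [single_dotProduct, one_mul]⟩
    obtain ⟨a, ha, b, hb, ha0, hb0, rfl⟩ : ∃ a ∈ S.carrier, ∃ b ∈ S.carrier,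
        a ≠ 0 ∧ b ≠ 0 ∧ s = a + b := by
      by_contra h
      exact hmin ⟨hs, h0, h⟩
    obtain ⟨la, rfl⟩ := ih a (by omega) ha
    obtain ⟨lb, rfl⟩ := ih b (by omega) hb
    exact ⟨la + lb, (add_dotProduct la lb g).symm⟩

end MinGens

section Apery

variable {S} {ν : ℕ} {g lam μ : Fin ν → ℕ}

lemma dotProduct_mem_apery_of_le (hg : ∀ i, g i ∈ S.carrier) {n : ℕ} (h : lam ≤ μ)
    (hx : μ ⬝ᵥ g ∈ S.Apery n) : lam ⬝ᵥ g ∈ S.Apery n :=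
  mem_apery_of_sle hx (S.dotProduct_mem hg lam) (dotProduct_sle_of_le hg h)

lemma mul_mem_apery_of_dotProduct_mem (hg : ∀ i, g i ∈ S.carrier) {n : ℕ}
    (hx : μ ⬝ᵥ g ∈ S.Apery n) (i : Fin ν) : μ i * g i ∈ S.Apery n := by
  simpa [single_dotProduct] using dotProduct_mem_apery_of_le hg (single_le_of_le le_rfl) hx

lemma apply_eq_zero_of_dotProduct_mem_apery (hg : ∀ i, g i ∈ S.carrier) {i : Fin ν}
    (hx : μ ⬝ᵥ g ∈ S.Apery (g i)) : μ i = 0 := by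
  by_contra hi
  have hle : Pi.single i 1 ≤ μ := single_le_of_le (Nat.one_le_iff_ne_zero.mpr hi)
  refine hx.2 ⟨(μ - Pi.single i 1) ⬝ᵥ g, S.dotProduct_mem hg _, ?_⟩
  rw [dotProduct_eq_add_of_le hle, single_dotProduct, one_mul, add_comm]

lemma bddAbove_mul_mem_apery {n : ℕ} {a : ℕ} (ha : a ≠ 0) :
    BddAbove {h | h * a ∈ S.Apery n} := by
  obtain ⟨N, hN⟩ := S.bddAbove_apery n
  exact ⟨N, fun h hh => (Nat.le_mul_of_pos_right h (Nat.pos_of_ne_zero ha)).trans (hN hh)⟩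

lemma alpha_mul_mem_apery (hg : S.MinGens g) (i : Fin ν) :
    S.alpha g i * g i ∈ S.Apery S.mult :=
  Nat.sSup_mem ⟨0, by simpa using S.zero_mem_apery S.mult_mem_and_ne_zero.2⟩
    (bddAbove_mul_mem_apery (hg.ne_zero i))

lemma apply_le_alpha (hg : S.MinGens g) (hx : μ ⬝ᵥ g ∈ S.Apery S.mult) (i : Fin ν) :
    μ i ≤ S.alpha g i :=
  le_csSup (bddAbove_mul_mem_apery (hg.ne_zero i)) (mul_mem_apery_of_dotProduct_mem hg.mem hx i)

end Apery

def rectCorner {ν : ℕ} (c : Fin ν → ℕ) : Fin ν → ℕ := fun i => if i.val = 0 then 0 else c i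

lemma mem_rect_iff {ν : ℕ} {g c : Fin ν → ℕ} {s : ℕ} :
    s ∈ rect g c ↔ ∃ lam ≤ rectCorner c, s = lam ⬝ᵥ g := by
  constructor
  · rintro ⟨lam, hlam0, hlamc, rfl⟩
    refine ⟨lam, fun i => ?_, rfl⟩
    by_cases hi : i.val = 0 <;> simp [rectCorner, hi, hlam0, hlamc]
  · rintro ⟨lam, hlam, rfl⟩
    refine ⟨lam, fun i hi => ?_, fun i => ?_, rfl⟩
    · simpa [rectCorner, hi] using hlam i
    · refine (hlam i).trans ?_
      by_cases hi : i.val = 0 <;> simp [rectCorner, hi]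

lemma le_rectCorner_alpha {ν : ℕ} {g μ : Fin ν → ℕ} (hg : S.MinGens g)
    (hx : μ ⬝ᵥ g ∈ S.Apery S.mult) : μ ≤ rectCorner (S.alpha g) := by
  intro i
  by_cases hi : i.val = 0
  · have hgi : g i = S.mult := by
      rw [← hg.apply_zero i.pos]
      exact congrArg g (Fin.ext hi)
    simp [rectCorner, hi, apply_eq_zero_of_dotProduct_mem_apery hg.mem (hgi ▸ hx)]
  · simpa [rectCorner, hi] using apply_le_alpha hg hx i

lemma le_of_sle_of_forall_eq {ν : ℕ} {g lam μ : Fin ν → ℕ} (hg : S.MinGens g) {x : ℕ}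
    (hμ : ∀ κ, x = κ ⬝ᵥ g → κ = μ) (hw : S.sle (lam ⬝ᵥ g) x) : lam ≤ μ := by
  obtain ⟨u, hu, hx⟩ := hw
  obtain ⟨κ, rfl⟩ := hg.exists_eq_dotProduct hu
  rw [← hμ (lam + κ) (by rw [add_dotProduct, hx])]
  exact fun i => Nat.le_add_right _ _

lemma rectCorner_alpha_le {ν : ℕ} {g μ : Fin ν → ℕ} (hg : S.MinGens g)
    (hμ : ∀ κ, μ ⬝ᵥ g = κ ⬝ᵥ g → κ = μ)
    (hgreatest : ∀ w ∈ S.Apery S.mult, S.sle w (μ ⬝ᵥ g)) : rectCorner (S.alpha g) ≤ μ := by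
  intro i
  by_cases hi : i.val = 0
  · simp [rectCorner, hi]
  · have hsle : S.sle (Pi.single i (S.alpha g i) ⬝ᵥ g) (μ ⬝ᵥ g) := by
      rw [single_dotProduct]
      exact hgreatest _ (alpha_mul_mem_apery hg i)
    simpa [rectCorner, hi] using S.le_of_sle_of_forall_eq hg hμ hsle i

end NumSgp

open NumSgp

/-- `Ap(S, m)` is α-rectangular iff the poset `(Ap(S, m), ⪯)` has a unique
maximal element and that element has a unique representation. -/
theorem stmt_5 (S : NumSgp) (ν : ℕ) (g : Fin ν → ℕ) (hg : S.MinGens g) :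
    S.Apery S.mult = rect g (S.alpha g) ↔
      ∃ x, (x ∈ S.Apery S.mult ∧ ∀ y ∈ S.Apery S.mult, S.sle x y → y = x) ∧
        (∀ x', (x' ∈ S.Apery S.mult ∧ ∀ y ∈ S.Apery S.mult, S.sle x' y → y = x') → x' = x) ∧
        UniqueRep g x := by
  constructor
  · intro hrect
    have hx : rectCorner (S.alpha g) ⬝ᵥ g ∈ S.Apery S.mult :=
      hrect ▸ mem_rect_iff.mpr ⟨_, le_rfl, rfl⟩
    have hgreatest : ∀ w ∈ S.Apery S.mult, S.sle w (rectCorner (S.alpha g) ⬝ᵥ g) := by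
      intro w hw
      obtain ⟨lam, hlam, rfl⟩ := mem_rect_iff.mp (hrect ▸ hw)
      exact dotProduct_sle_of_le hg.mem hlam
    obtain ⟨hmax, hunique⟩ := isSleMaximal_of_forall_sle hx hgreatest
    refine ⟨_, hmax, hunique, ExistsUnique.intro _ rfl fun μ (hμ : _ = μ ⬝ᵥ g) => ?_⟩
    exact eq_of_le_of_dotProduct_eq hg.ne_zero (S.le_rectCorner_alpha hg (hμ ▸ hx)) hμ.symm
  · rintro ⟨x, hxmax, hxuniq, μ, hxμ, hμ⟩
    obtain rfl : x = μ ⬝ᵥ g := hxμ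
    have hgreatest : ∀ w ∈ S.Apery S.mult, S.sle w (μ ⬝ᵥ g) := fun w hw =>
      sle_of_forall_isSleMaximal_eq (S.bddAbove_apery _) hxuniq hw
    have hμα : μ = rectCorner (S.alpha g) :=
      (S.le_rectCorner_alpha hg hxmax.1).antisymm (S.rectCorner_alpha_le hg hμ hgreatest)
    ext w
    rw [mem_rect_iff, ← hμα]
    refine ⟨fun hw => ?_, fun ⟨lam, hlam, hw⟩ => hw ▸ dotProduct_mem_apery_of_le hg.mem hlam hxmax.1⟩
    obtain ⟨lam, rfl⟩ := hg.exists_eq_dotProduct hw.1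
    exact ⟨lam, S.le_of_sle_of_forall_eq hg hμ (hgreatest _ hw), rfl⟩
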